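/- arXiv:cond-mat/0403240 — 5 statements merged into one kernel-verified Lean document; each statement's English description precedes it below -/
import Mathlib

section
/- Let d ≥ 1 be an integer and λ ≥ 0. On the Hilbert space (ℂ²)^{⊗(2d+1)}, with tensor factors labeled by a distinguished index 0 and indices 1,…,2d, the lowest eigenvalue of the Hermitian operator − (1/2) S¹_0 Σ_{i=1}^{2d} S¹_i − (1/2) S²_0 Σ_{i=1}^{2d} S²_i + λ S³_0 equals −(1/4)·[d(d+1) + 4λ²]^{1/2}. -/
open scoped BigOperators
open Matrix

noncomputable section

/-- Spin configurations of `m` two-level systems: the Hilbert space `(ℂ²)^{⊗m}`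
is realized as matrices indexed by `Fin m → Bool` (`true` = spin up). -/
abbrev Cfg' (m : ℕ) := Fin m → Bool

/-- Entries of the Pauli matrix σ¹. -/
def pauli1 (a b : Bool) : ℂ := if a = b then 0 else 1

/-- Entries of the Pauli matrix σ². -/
def pauli2 (a b : Bool) : ℂ := if a = b then 0 else if b then Complex.I else -Complex.I

/-- Entries of the Pauli matrix σ³. -/
def pauli3 (a b : Bool) : ℂ := if a = b then (if a then 1 else -1) else 0

/-- The spin-1/2 operator `(1/2)·σ` acting on the `j`-th tensor factor of `(ℂ²)^{⊗m}`
(identity on the other factors). -/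
def spinAt (m : ℕ) (p : Bool → Bool → ℂ) (j : Fin m) : Matrix (Cfg' m) (Cfg' m) ℂ :=
  fun σ τ => if Function.update σ j (τ j) = τ then (1/2 : ℂ) * p (σ j) (τ j) else 0

/-- The one-site-plus-neighbors operator
`−(1/2) S¹₀ Σ_{i=1}^{2d} S¹ᵢ − (1/2) S²₀ Σ_{i=1}^{2d} S²ᵢ + λ S³₀`
on `(ℂ²)^{⊗(2d+1)}`, the distinguished factor being the index `0`. -/
def starOp (d : ℕ) (lam : ℝ) : Matrix (Cfg' (2 * d + 1)) (Cfg' (2 * d + 1)) ℂ :=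
  -((1/2 : ℂ) • (spinAt (2 * d + 1) pauli1 0 * ∑ i : Fin (2 * d), spinAt (2 * d + 1) pauli1 i.succ))
  - (1/2 : ℂ) • (spinAt (2 * d + 1) pauli2 0 * ∑ i : Fin (2 * d), spinAt (2 * d + 1) pauli2 i.succ)
  + (lam : ℂ) • spinAt (2 * d + 1) pauli3 0

/-!
In the spin basis the operator is the complexification of a real matrix `H`: a diagonal field
term plus entries `-1/4` between configurations related by exchanging the central spin with an
opposite bath spin. Since the off-diagonal entries of `H` are nonpositive, an everywhere positive
`φ` with `H φ ≥ E φ` bounds every eigenvalue from below by `E`: compare an eigenvector `ψ` with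
`φ` at a maximiser of `|ψ| / φ`. Both `φ` and the ground state are taken constant on the sectors
fixed by the central spin and the number `k` of up bath spins; there `H` acts through the blocks
`[[λ/2, -(2d-k)/4], [-(k+1)/4, -λ/2]]`, with lowest eigenvalue `-(1/4)√((k+1)(2d-k) + 4λ²)`,
smallest at `k = d`, where it is `-√D / 4` with `D = d(d+1) + 4λ²`.
-/

theorem le_eigenvalue_of_pos_supersolution {ι : Type*} [Fintype ι] (H : Matrix ι ι ℝ)
    (hH : ∀ i j, i ≠ j → H i j ≤ 0) {φ : ι → ℝ} (hφ : ∀ i, 0 < φ i) {E : ℝ}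
    (hE : ∀ i, E * φ i ≤ (H *ᵥ φ) i) {μ : ℝ} {ψ : ι → ℂ} (hψ : ψ ≠ 0)
    (h : H.map (↑) *ᵥ ψ = (μ : ℂ) • ψ) : E ≤ μ := by
  classical
  obtain ⟨j, hj⟩ := Function.ne_iff.mp hψ
  obtain ⟨i, -, hi⟩ :=
    Finset.exists_max_image Finset.univ (fun k => ‖ψ k‖ / φ k) ⟨j, Finset.mem_univ j⟩
  set r := ‖ψ i‖ / φ i
  have hr : 0 < r := (div_pos (norm_pos_iff.mpr hj) (hφ j)).trans_le (hi j (Finset.mem_univ j))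
  have hψ_le : ∀ k, ‖ψ k‖ ≤ r * φ k :=
    fun k => (div_le_iff₀ (hφ k)).mp (hi k (Finset.mem_univ k))
  have hψi : ‖ψ i‖ = r * φ i := (div_mul_cancel₀ _ (hφ i).ne').symm
  set S := ∑ k ∈ Finset.univ.erase i, H i k * φ k
  have hHφ : (H *ᵥ φ) i = H i i * φ i + S := (Finset.add_sum_erase _ _ (Finset.mem_univ i)).symm
  have hrow : ((μ : ℂ) - H i i) * ψ i = ∑ k ∈ Finset.univ.erase i, (H i k : ℂ) * ψ k := by
    have := congrFun h i
    simp only [Matrix.mulVec, dotProduct, Matrix.map_apply, Pi.smul_apply, smul_eq_mul] at this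
    rw [← Finset.add_sum_erase _ _ (Finset.mem_univ i)] at this
    linear_combination -this
  have hrow_le : r * ((H i i - μ) * φ i) ≤ r * -S := by
    calc r * ((H i i - μ) * φ i) ≤ ‖((μ : ℂ) - H i i) * ψ i‖ := by
          rw [norm_mul, hψi, ← Complex.ofReal_sub, Complex.norm_real, Real.norm_eq_abs,
            abs_sub_comm]
          nlinarith [le_abs_self (H i i - μ), mul_pos hr (hφ i)]
      _ ≤ ∑ k ∈ Finset.univ.erase i, -H i k * ‖ψ k‖ := by
          rw [hrow]
          refine (norm_sum_le _ _).trans (Finset.sum_le_sum fun k hk => ?_)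
          rw [norm_mul, Complex.norm_real, Real.norm_eq_abs,
            abs_of_nonpos (hH i k (Finset.ne_of_mem_erase hk).symm)]
      _ ≤ ∑ k ∈ Finset.univ.erase i, -H i k * (r * φ k) :=
          Finset.sum_le_sum fun k hk => mul_le_mul_of_nonneg_left (hψ_le k)
            (neg_nonneg.mpr (hH i k (Finset.ne_of_mem_erase hk).symm))
      _ = r * -S := by
          rw [← Finset.sum_neg_distrib, Finset.mul_sum]
          exact Finset.sum_congr rfl fun k _ => by ring
  have hHφ_le : (H *ᵥ φ) i ≤ μ * φ i := by
    rw [hHφ]; linarith [le_of_mul_le_mul_left hrow_le hr]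
  exact le_of_mul_le_mul_right ((hE i).trans hHφ_le) (hφ i)

lemma Matrix.map_ofReal_mulVec {ι : Type*} [Fintype ι] (H : Matrix ι ι ℝ) (v : ι → ℝ) :
    H.map (↑) *ᵥ (fun i => (v i : ℂ)) = fun i => ((H *ᵥ v) i : ℂ) :=
  funext fun i => (Complex.ofRealHom.map_mulVec H v i).symm

namespace SpinStar

section Configurations

variable {m : ℕ}

def flipTwo (σ : Cfg' m) (j k : Fin m) : Cfg' m :=
  Function.update (Function.update σ j (!σ j)) k (!σ k)

@[simp] lemma flipTwo_apply_left (σ : Cfg' m) {j k : Fin m} (hjk : j ≠ k) :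
    flipTwo σ j k j = !σ j := by
  simp [flipTwo, Function.update_of_ne hjk]

@[simp] lemma flipTwo_apply_right (σ : Cfg' m) (j k : Fin m) : flipTwo σ j k k = !σ k := by
  simp [flipTwo]

lemma flipTwo_apply_of_ne (σ : Cfg' m) {j k l : Fin m} (hj : l ≠ j) (hk : l ≠ k) :
    flipTwo σ j k l = σ l := by
  simp [flipTwo, Function.update_of_ne hj, Function.update_of_ne hk]

lemma flipTwo_flipTwo (σ : Cfg' m) {j k : Fin m} (hjk : j ≠ k) :
    flipTwo (flipTwo σ j k) j k = σ := by
  funext l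
  by_cases hj : l = j
  · subst hj; simp [hjk]
  by_cases hk : l = k
  · subst hk; simp
  · simp only [flipTwo_apply_of_ne _ hj hk]

end Configurations

section Spin

variable {m : ℕ}

lemma spinAt_mulVec_apply (p : Bool → Bool → ℂ) (j : Fin m) (v : Cfg' m → ℂ) (σ : Cfg' m) :
    (spinAt m p j *ᵥ v) σ = ∑ b : Bool, 1 / 2 * p (σ j) b * v (Function.update σ j b) := by
  have hsupp : Finset.univ.filter (fun τ : Cfg' m => Function.update σ j (τ j) = τ) =
      Finset.univ.image (Function.update σ j) := by
    ext τ
    simp only [Finset.mem_filter, Finset.mem_univ, true_and, Finset.mem_image]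
    exact ⟨fun h => ⟨τ j, h⟩, by rintro ⟨b, rfl⟩; simp⟩
  simp only [Matrix.mulVec, dotProduct, spinAt, ite_mul, zero_mul]
  rw [← Finset.sum_filter, hsupp, Finset.sum_image fun b _ c _ h => Function.update_injective σ j h]
  simp

lemma pauli1_mul_add_pauli2_mul (s t b c : Bool) :
    pauli1 s b * pauli1 t c + pauli2 s b * pauli2 t c =
      if s ≠ t ∧ b = !s ∧ c = !t then 2 else 0 := by
  cases s <;> cases t <;> cases b <;> cases c <;> norm_num [pauli1, pauli2]

lemma spinAt_xy_mulVec_apply {j k : Fin m} (hjk : j ≠ k) (v : Cfg' m → ℂ) (σ : Cfg' m) :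
    ((spinAt m pauli1 j * spinAt m pauli1 k + spinAt m pauli2 j * spinAt m pauli2 k) *ᵥ v) σ =
      if σ j ≠ σ k then 1 / 2 * v (flipTwo σ j k) else 0 := by
  simp only [Matrix.add_mulVec, ← Matrix.mulVec_mulVec, Pi.add_apply, spinAt_mulVec_apply,
    Function.update_of_ne hjk.symm, Finset.mul_sum, ← Finset.sum_add_distrib]
  calc _ = ∑ b : Bool, ∑ c : Bool, 1 / 4 * (pauli1 (σ j) b * pauli1 (σ k) c
          + pauli2 (σ j) b * pauli2 (σ k) c) * v (Function.update (Function.update σ j b) k c) :=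
        Finset.sum_congr rfl fun b _ => Finset.sum_congr rfl fun c _ => by ring
    _ = _ := by
        by_cases h : σ j = σ k
        · simp [pauli1_mul_add_pauli2_mul, h]
        · norm_num [pauli1_mul_add_pauli2_mul, h, ite_and, flipTwo]

lemma spinAt_pauli3_mulVec_apply (j : Fin m) (v : Cfg' m → ℂ) (σ : Cfg' m) :
    (spinAt m pauli3 j *ᵥ v) σ = (if σ j then 1 / 2 else -(1 / 2)) * v σ := by
  have hσ : ∀ b, σ j = b → Function.update σ j b = σ := fun b h => h ▸ Function.update_eq_self j σ
  rw [spinAt_mulVec_apply]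
  cases h : σ j <;> simp [pauli3, hσ _ h]

end Spin

section Hopping

variable {n : ℕ}

def partners (σ : Cfg' (n + 1)) : Finset (Fin n) := Finset.univ.filter fun i => σ 0 ≠ σ i.succ

def hopping (R : Type*) [NonAssocSemiring R] (n : ℕ) : Matrix (Cfg' (n + 1)) (Cfg' (n + 1)) R :=
  Matrix.of fun σ τ => ∑ i ∈ partners σ, if flipTwo σ 0 i.succ = τ then 1 else 0

lemma hopping_mulVec_apply {R : Type*} [NonAssocSemiring R] (v : Cfg' (n + 1) → R)
    (σ : Cfg' (n + 1)) : (hopping R n *ᵥ v) σ = ∑ i ∈ partners σ, v (flipTwo σ 0 i.succ) := by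
  simp only [Matrix.mulVec, dotProduct, hopping, Matrix.of_apply, Finset.sum_mul, ite_mul,
    one_mul, zero_mul]
  rw [Finset.sum_comm]
  simp

lemma hopping_map_ofReal : (hopping ℝ n).map ((↑) : ℝ → ℂ) = hopping ℂ n := by
  ext σ τ
  simp [hopping]

lemma hopping_nonneg (σ τ : Cfg' (n + 1)) : 0 ≤ hopping ℝ n σ τ := by
  simp only [hopping, Matrix.of_apply]
  positivity

def upCount (σ : Cfg' (n + 1)) : ℕ := (Finset.univ.filter fun i : Fin n => σ i.succ = true).card

lemma upCount_le (σ : Cfg' (n + 1)) : upCount σ ≤ n :=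
  (Finset.card_filter_le _ _).trans (Finset.card_fin n).le

lemma card_filter_eq_false (σ : Cfg' (n + 1)) :
    (Finset.univ.filter fun i : Fin n => σ i.succ = false).card = n - upCount σ := by
  have := Finset.card_filter_add_card_filter_not (s := Finset.univ) fun i : Fin n => σ i.succ
  simp only [Bool.not_eq_true, Finset.card_univ, Fintype.card_fin] at this
  rw [upCount]
  omega

lemma upCount_flipTwo_of_false (σ : Cfg' (n + 1)) {i : Fin n} (hi : σ i.succ = false) :
    upCount (flipTwo σ 0 i.succ) = upCount σ + 1 := by
  have hfilter : (Finset.univ.filter fun k : Fin n => flipTwo σ 0 i.succ k.succ = true) =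
      insert i (Finset.univ.filter fun k : Fin n => σ k.succ = true) := by
    ext k
    by_cases hk : k = i
    · subst hk; simp [hi]
    · simp [flipTwo_apply_of_ne _ (Fin.succ_ne_zero k) (Fin.succ_inj.not.mpr hk), hk]
  rw [upCount, hfilter, Finset.card_insert_of_notMem (by simp [hi])]
  rfl

lemma upCount_flipTwo_of_true (σ : Cfg' (n + 1)) {i : Fin n} (hi : σ i.succ = true) :
    upCount (flipTwo σ 0 i.succ) = upCount σ - 1 := by
  have hflip : flipTwo σ 0 i.succ i.succ = false := by simp [hi]
  have := upCount_flipTwo_of_false _ hflip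
  rw [flipTwo_flipTwo _ (Fin.succ_ne_zero i).symm] at this
  omega

def sectorVec {R : Type*} (F : Bool → ℕ → R) (σ : Cfg' (n + 1)) : R := F (σ 0) (upCount σ)

lemma hopping_mulVec_sectorVec_of_true {R : Type*} [NonAssocSemiring R] (F : Bool → ℕ → R)
    {σ : Cfg' (n + 1)} (hσ : σ 0 = true) :
    (hopping R n *ᵥ sectorVec F) σ = (n - upCount σ : ℕ) * F false (upCount σ + 1) := by
  have hpartners : partners σ = Finset.univ.filter fun i : Fin n => σ i.succ = false := by
    simp [partners, hσ]
  rw [hopping_mulVec_apply, hpartners, ← card_filter_eq_false, ← nsmul_eq_mul,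
    ← Finset.sum_const]
  refine Finset.sum_congr rfl fun i hi => ?_
  have hi : σ i.succ = false := (Finset.mem_filter.mp hi).2
  simp [sectorVec, flipTwo_apply_left σ (Fin.succ_ne_zero i).symm, hσ,
    upCount_flipTwo_of_false σ hi]

lemma hopping_mulVec_sectorVec_of_false {R : Type*} [NonAssocSemiring R] (F : Bool → ℕ → R)
    {σ : Cfg' (n + 1)} (hσ : σ 0 = false) :
    (hopping R n *ᵥ sectorVec F) σ = upCount σ * F true (upCount σ - 1) := by
  have hpartners : partners σ = Finset.univ.filter fun i : Fin n => σ i.succ = true := by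
    simp [partners, hσ]
  rw [hopping_mulVec_apply, hpartners, upCount, ← nsmul_eq_mul, ← Finset.sum_const, ← upCount]
  refine Finset.sum_congr rfl fun i hi => ?_
  have hi : σ i.succ = true := (Finset.mem_filter.mp hi).2
  simp [sectorVec, flipTwo_apply_left σ (Fin.succ_ne_zero i).symm, hσ,
    upCount_flipTwo_of_true σ hi]

end Hopping

section StarHamiltonian

variable {n : ℕ}

def starHam (n : ℕ) (lam : ℝ) : Matrix (Cfg' (n + 1)) (Cfg' (n + 1)) ℝ :=
  Matrix.diagonal (fun σ => lam * if σ 0 then 1 / 2 else -(1 / 2)) - (4⁻¹ : ℝ) • hopping ℝ n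

lemma starHam_apply_nonpos (lam : ℝ) {σ τ : Cfg' (n + 1)} (h : σ ≠ τ) :
    starHam n lam σ τ ≤ 0 := by
  simp [starHam, Matrix.diagonal_apply_ne _ h, hopping_nonneg]

lemma starHam_mulVec_apply (lam : ℝ) (v : Cfg' (n + 1) → ℝ) (σ : Cfg' (n + 1)) :
    (starHam n lam *ᵥ v) σ =
      lam * (if σ 0 then 1 / 2 else -(1 / 2)) * v σ - 4⁻¹ * (hopping ℝ n *ᵥ v) σ := by
  simp [starHam, Matrix.sub_mulVec, Matrix.mulVec_diagonal, Matrix.smul_mulVec]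

lemma starHam_map_ofReal (lam : ℝ) : (starHam n lam).map (↑) =
    Matrix.diagonal (fun σ => (lam : ℂ) * if σ 0 then 1 / 2 else -(1 / 2)) -
      (4⁻¹ : ℂ) • hopping ℂ n := by
  rw [← hopping_map_ofReal]
  ext σ τ
  by_cases h : σ = τ
  · subst h
    cases hσ : σ 0 <;> simp [starHam, hσ]
  · simp [starHam, Matrix.diagonal_apply_ne _ h]

lemma starOp_eq_map (d : ℕ) (lam : ℝ) : starOp d lam = (starHam (2 * d) lam).map (↑) := by
  have hxy : starOp d lam = -((1 / 2 : ℂ) • ∑ i : Fin (2 * d),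
      (spinAt _ pauli1 0 * spinAt _ pauli1 i.succ + spinAt _ pauli2 0 * spinAt _ pauli2 i.succ))
        + (lam : ℂ) • spinAt _ pauli3 0 := by
    rw [starOp, Matrix.mul_sum, Matrix.mul_sum, Finset.sum_add_distrib, smul_add]
    abel
  rw [starHam_map_ofReal]
  refine Matrix.ext_of_mulVec_single fun τ => funext fun σ => ?_
  rw [hxy, Matrix.add_mulVec]
  simp only [Matrix.neg_mulVec, Matrix.smul_mulVec, Matrix.sum_mulVec,
    Matrix.sub_mulVec, Matrix.mulVec_diagonal, Pi.add_apply, Pi.neg_apply, Pi.smul_apply, Pi.sub_apply,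
    Finset.sum_apply, spinAt_xy_mulVec_apply (Fin.succ_ne_zero _).symm, spinAt_pauli3_mulVec_apply,
    hopping_mulVec_apply, partners, Finset.sum_filter, smul_eq_mul]
  rw [← Finset.sum_filter, ← Finset.sum_filter, ← Finset.mul_sum]
  ring

end StarHamiltonian

lemma natCast_mul_two_mul_add_one_sub_le (d u : ℕ) :
    (u : ℝ) * (2 * d + 1 - u) ≤ d * (d + 1) := by
  rcases le_or_gt u d with h | h
  · have : (u : ℝ) ≤ d := by exact_mod_cast h
    nlinarith
  · have : (d : ℝ) + 1 ≤ u := by exact_mod_cast h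
    nlinarith

section Spectrum

variable {d : ℕ}

lemma two_mul_add_sqrt_pos (hd : 1 ≤ d) (lam : ℝ) :
    0 < 2 * lam + √((d : ℝ) * ((d : ℝ) + 1) + 4 * lam ^ 2) := by
  have hd' : (1 : ℝ) ≤ d := by exact_mod_cast hd
  have : |2 * lam| < √((d : ℝ) * ((d : ℝ) + 1) + 4 * lam ^ 2) :=
    Real.lt_sqrt_of_sq_lt (by rw [sq_abs]; nlinarith)
  linarith [neg_abs_le (2 * lam)]

-- the eigenvector of the `k = d` block for its lower eigenvalue
def groundAmp (d : ℕ) (lam : ℝ) (b : Bool) (k : ℕ) : ℝ :=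
  if b then if k = d then d else 0
  else if k = d + 1 then 2 * lam + √((d : ℝ) * ((d : ℝ) + 1) + 4 * lam ^ 2) else 0

lemma starHam_mulVec_sectorVec_groundAmp (d : ℕ) (lam : ℝ) :
    starHam (2 * d) lam *ᵥ sectorVec (groundAmp d lam) =
      (-(1 / 4) * √((d : ℝ) * ((d : ℝ) + 1) + 4 * lam ^ 2)) • sectorVec (groundAmp d lam) := by
  have hs : √((d : ℝ) * ((d : ℝ) + 1) + 4 * lam ^ 2) ^ 2 = d * (d + 1) + 4 * lam ^ 2 :=
    Real.sq_sqrt (by positivity)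
  funext σ
  rw [starHam_mulVec_apply, Pi.smul_apply, smul_eq_mul]
  cases hσ : σ 0
  · rw [hopping_mulVec_sectorVec_of_false _ hσ]
    by_cases hu : upCount σ = d + 1
    · simp only [sectorVec, groundAmp, hσ, hu, Bool.false_eq_true, ↓reduceIte,
        add_tsub_cancel_right]
      push_cast
      linear_combination (1 / 4) * hs
    · have : ¬ upCount σ - 1 = d ∨ upCount σ = 0 := by omega
      rcases this with h | h <;> simp [sectorVec, groundAmp, hσ, hu, h]
  · rw [hopping_mulVec_sectorVec_of_true _ hσ]
    by_cases hu : upCount σ = d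
    · simp only [sectorVec, groundAmp, hσ, hu, show 2 * d - d = d by omega, ↓reduceIte,
        Bool.false_eq_true]
      ring
    · simp [sectorVec, groundAmp, hσ, hu]

lemma sectorVec_groundAmp_ne_zero (hd : 1 ≤ d) (lam : ℝ) :
    sectorVec (n := 2 * d) (groundAmp d lam) ≠ 0 := by
  set σ : Cfg' (2 * d + 1) := fun j => decide ((j : ℕ) ≤ d)
  have hσ : σ 0 = true := by simp [σ]
  have hu : upCount σ = d := by
    have hfilter : (Finset.univ.filter fun i : Fin (2 * d) => σ i.succ = true) =
        Finset.univ.filter fun i : Fin (2 * d) => (i : ℕ) < d := by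
      ext i
      simp [σ]
    rw [upCount, hfilter, Fin.card_filter_val_lt]
    omega
  intro h
  have := congrFun h σ
  simp only [sectorVec, groundAmp, hσ, hu, ↓reduceIte, Pi.zero_apply, Nat.cast_eq_zero] at this
  omega

-- With `a = 2λ + √D` this gives `H φ = -(√D / 4) φ` at every `σ` with central spin up and some
-- bath spin down; at central spin down, `H φ ≥ -(√D / 4) φ` reduces to `k (2d + 1 - k) ≤ d (d + 1)`.
def superAmp (d : ℕ) (lam : ℝ) (b : Bool) (k : ℕ) : ℝ :=
  if b then 1 else (2 * lam + √((d : ℝ) * ((d : ℝ) + 1) + 4 * lam ^ 2)) / (2 * d + 1 - k)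

lemma sectorVec_superAmp_pos (hd : 1 ≤ d) (lam : ℝ) (σ : Cfg' (2 * d + 1)) :
    0 < sectorVec (superAmp d lam) σ := by
  have hu : (upCount σ : ℝ) ≤ 2 * d := by exact_mod_cast upCount_le σ
  cases hσ : σ 0
  · simp only [sectorVec, superAmp, hσ]
    exact div_pos (two_mul_add_sqrt_pos hd lam) (by linarith)
  · simp [sectorVec, superAmp, hσ]

lemma le_starHam_mulVec_sectorVec_superAmp (hd : 1 ≤ d) (lam : ℝ) (σ : Cfg' (2 * d + 1)) :
    -(1 / 4) * √((d : ℝ) * ((d : ℝ) + 1) + 4 * lam ^ 2) * sectorVec (superAmp d lam) σ ≤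
      (starHam (2 * d) lam *ᵥ sectorVec (superAmp d lam)) σ := by
  have hs : √((d : ℝ) * ((d : ℝ) + 1) + 4 * lam ^ 2) ^ 2 = d * (d + 1) + 4 * lam ^ 2 :=
    Real.sq_sqrt (by positivity)
  have ha := two_mul_add_sqrt_pos hd lam
  have hu := upCount_le σ
  have hu' : (upCount σ : ℝ) ≤ 2 * d := by exact_mod_cast hu
  rw [starHam_mulVec_apply]
  cases hσ : σ 0
  · rw [hopping_mulVec_sectorVec_of_false _ hσ]
    simp only [sectorVec, superAmp, hσ, Bool.false_eq_true, if_true, if_false]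
    generalize √((d : ℝ) * ((d : ℝ) + 1) + 4 * lam ^ 2) = s at hs ha ⊢
    have hw : (0 : ℝ) < 2 * d + 1 - upCount σ := by linarith
    have hcount := natCast_mul_two_mul_add_one_sub_le d (upCount σ)
    rw [← sub_nonneg]
    have key : (lam * -(1 / 2)) * ((2 * lam + s) / (2 * d + 1 - upCount σ)) - 4⁻¹ * (upCount σ * 1)
        - -(1 / 4) * s * ((2 * lam + s) / (2 * d + 1 - upCount σ)) =
        ((s - 2 * lam) * (2 * lam + s) - upCount σ * (2 * d + 1 - upCount σ)) /
          (4 * (2 * d + 1 - upCount σ)) := by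
      field_simp
      ring
    rw [key]
    apply div_nonneg _ (by positivity)
    nlinarith
  · rw [hopping_mulVec_sectorVec_of_true _ hσ]
    simp only [sectorVec, superAmp, hσ, Bool.false_eq_true, if_true, if_false]
    generalize √((d : ℝ) * ((d : ℝ) + 1) + 4 * lam ^ 2) = s at hs ha ⊢
    have hq : ((2 * d - upCount σ : ℕ) : ℝ) = 2 * d + 1 - (upCount σ + 1 : ℕ) := by
      push_cast [hu]
      ring
    rw [hq]
    generalize (2 : ℝ) * d + 1 - (upCount σ + 1 : ℕ) = q at hq
    have hq0 : 0 ≤ q := hq ▸ Nat.cast_nonneg _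
    have : q * ((2 * lam + s) / q) ≤ 2 * lam + s := by
      rcases hq0.eq_or_lt with h | h
      · simp [← h, ha.le]
      · rw [mul_div_cancel₀ _ h.ne']
    linarith

end Spectrum

end SpinStar

open SpinStar

theorem starOp_lowest_eigenvalue_general (d : ℕ) (hd : 1 ≤ d) (lam : ℝ) :
    IsLeast {μ : ℝ | ∃ ψ : Cfg' (2 * d + 1) → ℂ, ψ ≠ 0 ∧
        (starOp d lam).mulVec ψ = (μ : ℂ) • ψ}
      (-(1/4) * Real.sqrt ((d : ℝ) * ((d : ℝ) + 1) + 4 * lam ^ 2)) := by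
  rw [starOp_eq_map]
  refine ⟨⟨fun σ => ((sectorVec (groundAmp d lam) σ : ℝ) : ℂ), fun h => ?_, ?_⟩, ?_⟩
  · exact sectorVec_groundAmp_ne_zero hd lam (funext fun σ => by simpa using congrFun h σ)
  · rw [Matrix.map_ofReal_mulVec, starHam_mulVec_sectorVec_groundAmp]
    ext σ
    simp
  · rintro μ ⟨ψ, hψ, h⟩
    exact le_eigenvalue_of_pos_supersolution _ (fun σ τ => starHam_apply_nonpos lam)
      (sectorVec_superAmp_pos hd lam) (le_starHam_mulVec_sectorVec_superAmp hd lam) hψ h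

/-- The lowest eigenvalue of
`−(1/2) S¹₀ Σ_{i=1}^{2d} S¹ᵢ − (1/2) S²₀ Σ_{i=1}^{2d} S²ᵢ + λ S³₀`
equals `−(1/4)[d(d+1)+4λ²]^{1/2}`. -/
theorem starOp_lowest_eigenvalue (d : ℕ) (hd : 1 ≤ d) (lam : ℝ) (hlam : 0 ≤ lam) :
    IsLeast {μ : ℝ | ∃ ψ : Cfg' (2 * d + 1) → ℂ, ψ ≠ 0 ∧
        (starOp d lam).mulVec ψ = (μ : ℂ) • ψ}
      (-(1/4) * Real.sqrt ((d : ℝ) * ((d : ℝ) + 1) + 4 * lam ^ 2)) :=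
  starOp_lowest_eigenvalue_general d hd lam

end
end

section
/- Let H be an n×n Hermitian complex matrix, β > 0, and A an arbitrary n×n complex matrix. Then Tr( [A†, [H, A]] · e^{−βH} ) is a real number and is ≥ 0. (In particular, thermal expectations of such double commutators, as the quantities C_p in the paper, are nonnegative.) -/
/-!
Diagonalize `H = U D U*` with `U` unitary and `D = diag(λ)`, so that
`e^{-βH} = U diag(e^{-βλ}) U*`. Conjugation by `U` is a trace-preserving ⋆-automorphism, so with
`B = U* A U` the trace becomes `∑ i j, (λ i - λ j) (e^{-βλ j} - e^{-βλ i}) |B i j|²`, a real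
number whose terms are all nonnegative because `x ↦ e^{-βx}` is decreasing.
-/

open Matrix Unitary
open scoped ComplexOrder

namespace Matrix

section CommRing

variable {n R : Type*} [Fintype n] [CommRing R]

theorem trace_commutator_mul (C K ρ : Matrix n n R) :
    ((C * K - K * C) * ρ).trace = (K * (ρ * C - C * ρ)).trace := by
  simp only [sub_mul, mul_sub, trace_sub, Matrix.mul_assoc]
  rw [trace_mul_comm C, Matrix.mul_assoc]

variable [DecidableEq n]

theorem commutator_diagonal_apply (d : n → R) (B : Matrix n n R) (i j : n) :
    (diagonal d * B - B * diagonal d) i j = (d i - d j) * B i j := by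
  simp only [sub_apply, diagonal_mul, mul_diagonal]
  ring

theorem trace_double_commutator_mul_diagonal (d w : n → R) (B C : Matrix n n R) :
    ((C * (diagonal d * B - B * diagonal d) - (diagonal d * B - B * diagonal d) * C) *
        diagonal w).trace =
      ∑ i, ∑ j, (d i - d j) * (w j - w i) * (B i j * C j i) := by
  rw [trace_commutator_mul, trace, Finset.sum_congr rfl]
  intro i _
  simp only [diag_apply, mul_apply, commutator_diagonal_apply]
  refine Finset.sum_congr rfl fun j _ => ?_
  ring

end CommRing

section RCLike

variable {n 𝕜 : Type*} [Fintype n] [RCLike 𝕜]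

theorem trace_double_commutator_map (φ : Matrix n n 𝕜 ≃⋆ₐ[𝕜] Matrix n n 𝕜)
    (hφ : ∀ M, (φ M).trace = M.trace) (X B ρ : Matrix n n 𝕜) :
    (((φ B)ᴴ * (φ X * φ B - φ B * φ X) - (φ X * φ B - φ B * φ X) * (φ B)ᴴ) *
        φ ρ).trace =
      ((Bᴴ * (X * B - B * X) - (X * B - B * X) * Bᴴ) * ρ).trace := by
  simp only [← star_eq_conjTranspose, ← map_star, ← map_mul, ← map_sub, hφ]

variable [DecidableEq n]

theorem trace_conjStarAlgAut (U : unitary (Matrix n n 𝕜)) (M : Matrix n n 𝕜) :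
    (conjStarAlgAut 𝕜 _ U M).trace = M.trace := by
  rw [conjStarAlgAut_apply, trace_mul_cycle, coe_star_mul_self, Matrix.one_mul]

theorem exp_conjStarAlgAut (U : unitary (Matrix n n 𝕜)) (M : Matrix n n 𝕜) :
    NormedSpace.exp (conjStarAlgAut 𝕜 _ U M) = conjStarAlgAut 𝕜 _ U (NormedSpace.exp M) := by
  simpa using exp_units_conj (toUnits U) M

theorem IsHermitian.exp_real_smul {H : Matrix n n 𝕜} (hH : H.IsHermitian) (t : ℝ) :
    NormedSpace.exp ((t : 𝕜) • H) = conjStarAlgAut 𝕜 _ hH.eigenvectorUnitary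
      (diagonal (RCLike.ofReal ∘ fun i => Real.exp (t * hH.eigenvalues i))) := by
  conv_lhs =>
    rw [hH.spectral_theorem, ← map_smul, exp_conjStarAlgAut, ← diagonal_smul, exp_diagonal]
  congr 2
  ext i
  rw [Pi.coe_exp, Real.exp_eq_exp_ℝ, Pi.smul_apply, Function.comp_apply, smul_eq_mul,
    ← RCLike.ofReal_mul]
  exact (NormedSpace.map_exp (algebraMap ℝ 𝕜) (continuous_algebraMap ℝ 𝕜) _).symm

theorem trace_double_commutator_mul_diagonal_eq_ofReal (d w : n → ℝ) (B : Matrix n n 𝕜) :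
    ((Bᴴ * (diagonal (RCLike.ofReal ∘ d) * B - B * diagonal (RCLike.ofReal ∘ d)) -
        (diagonal (RCLike.ofReal ∘ d) * B - B * diagonal (RCLike.ofReal ∘ d)) * Bᴴ) *
        diagonal (RCLike.ofReal ∘ w)).trace =
      ((∑ i, ∑ j, (d i - d j) * (w j - w i) * ‖B i j‖ ^ 2 : ℝ) : 𝕜) := by
  rw [trace_double_commutator_mul_diagonal]
  push_cast
  refine Finset.sum_congr rfl fun i _ => Finset.sum_congr rfl fun j _ => ?_
  simp only [conjTranspose_apply, RCLike.star_def, RCLike.mul_conj, Function.comp_apply]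

theorem trace_double_commutator_mul_diagonal_nonneg {d w : n → ℝ} (hwd : Antivary w d)
    (B : Matrix n n 𝕜) :
    0 ≤ ((Bᴴ * (diagonal (RCLike.ofReal ∘ d) * B - B * diagonal (RCLike.ofReal ∘ d)) -
        (diagonal (RCLike.ofReal ∘ d) * B - B * diagonal (RCLike.ofReal ∘ d)) * Bᴴ) *
        diagonal (RCLike.ofReal ∘ w)).trace := by
  rw [trace_double_commutator_mul_diagonal_eq_ofReal, RCLike.ofReal_nonneg]
  refine Finset.sum_nonneg fun i _ => Finset.sum_nonneg fun j _ => ?_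
  have := hwd.sub_mul_sub_nonpos i j
  exact mul_nonneg (by linarith) (sq_nonneg _)

theorem IsHermitian.trace_double_commutator_mul_exp_nonneg {H : Matrix n n 𝕜}
    (hH : H.IsHermitian) {t : ℝ} (ht : t ≤ 0) (A : Matrix n n 𝕜) :
    0 ≤ ((Aᴴ * (H * A - A * H) - (H * A - A * H) * Aᴴ) *
      NormedSpace.exp ((t : 𝕜) • H)).trace := by
  set φ := conjStarAlgAut 𝕜 _ hH.eigenvectorUnitary
  have h_eigenbasis := trace_double_commutator_map φ (trace_conjStarAlgAut _)
    (diagonal (RCLike.ofReal ∘ hH.eigenvalues)) (φ.symm A)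
    (diagonal (RCLike.ofReal ∘ fun i => Real.exp (t * hH.eigenvalues i)))
  rw [← hH.spectral_theorem, φ.apply_symm_apply] at h_eigenbasis
  rw [hH.exp_real_smul, h_eigenbasis]
  have h_weights : Antivary (fun i => Real.exp (t * hH.eigenvalues i)) hH.eigenvalues :=
    (monovary_self _).comp_antitone_left (Real.exp_monotone.comp_antitone (antitone_mul_left ht))
  exact trace_double_commutator_mul_diagonal_nonneg h_weights _

end RCLike

end Matrix

/-- The thermal trace of a double commutator
`Tr([A†,[H,A]] e^{−βH})` is a nonnegative real number, for `H` Hermitian. -/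
theorem double_commutator_trace_nonneg (n : ℕ) (H A : Matrix (Fin n) (Fin n) ℂ)
    (hH : H.IsHermitian) (β : ℝ) (hβ : 0 < β) :
    ((Aᴴ * (H * A - A * H) - (H * A - A * H) * Aᴴ) *
        NormedSpace.exp ((-(β : ℂ)) • H)).trace.im = 0 ∧
      0 ≤ ((Aᴴ * (H * A - A * H) - (H * A - A * H) * Aᴴ) *
        NormedSpace.exp ((-(β : ℂ)) • H)).trace.re := by
  have h := hH.trace_double_commutator_mul_exp_nonneg (neg_nonpos.mpr hβ.le) A
  push_cast at h
  obtain ⟨h_re, h_im⟩ := Complex.nonneg_iff.mp h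
  exact ⟨h_im.symm, h_re⟩
end

section
/- Let M be an n×n positive semidefinite Hermitian complex matrix and m a natural number such that for every row index p the set { q : M_{pq} ≠ 0 } has at most m elements. Then every eigenvalue of M is at most m · max_p M_{pp}. (This is the 'almost diagonal matrix' bound used to show the one-particle density matrix has exactly one large eigenvalue.) -/
/-!
Positive semidefiniteness bounds every entry by the diagonal: the `2 × 2` principal minor at
`p, q` is nonnegative, i.e. `|M p q|² ≤ M p p * M q q`. By Gershgorin's theorem `|μ|` is at most
the absolute row sum of some row, which has at most `m` nonzero terms, each at most `max_p M p p`.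
-/

open Matrix
open scoped ComplexOrder

namespace Matrix

variable {n 𝕜 : Type*} [RCLike 𝕜] {A : Matrix n n 𝕜}

theorem PosSemidef.norm_apply_sq_le (hA : A.PosSemidef) (i j : n) :
    ‖A i j‖ ^ 2 ≤ RCLike.re (A i i) * RCLike.re (A j j) := by
  have hdet := (hA.submatrix ![i, j]).det_nonneg
  simp only [det_fin_two, submatrix_apply, cons_val_zero, cons_val_one] at hdet
  have hji : A j i = star (A i j) := by simpa using congrFun₂ hA.1.symm j i
  have hii : RCLike.im (A i i) = 0 := RCLike.conj_eq_iff_im.mp (hA.1.apply i i)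
  have hjj : RCLike.im (A j j) = 0 := RCLike.conj_eq_iff_im.mp (hA.1.apply j j)
  rw [hji, RCLike.star_def, RCLike.mul_conj] at hdet
  have hre := (RCLike.nonneg_iff.mp hdet).1
  simp only [map_sub, RCLike.mul_re, hii, hjj, mul_zero, sub_zero] at hre
  rw [← RCLike.ofReal_pow, RCLike.ofReal_re] at hre
  linarith

theorem PosSemidef.norm_apply_le_of_re_diag_le (hA : A.PosSemidef) {D : ℝ}
    (hD : ∀ i, RCLike.re (A i i) ≤ D) (i j : n) : ‖A i j‖ ≤ D := by
  have hii : 0 ≤ RCLike.re (A i i) := RCLike.nonneg_iff.mp hA.diag_nonneg |>.1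
  have hjj : 0 ≤ RCLike.re (A j j) := RCLike.nonneg_iff.mp hA.diag_nonneg |>.1
  refine (pow_le_pow_iff_left₀ (norm_nonneg _) (hii.trans (hD i)) two_ne_zero).mp ?_
  calc ‖A i j‖ ^ 2 ≤ RCLike.re (A i i) * RCLike.re (A j j) := hA.norm_apply_sq_le i j
    _ ≤ D ^ 2 := by rw [sq]; exact mul_le_mul (hD i) (hD j) hjj (hii.trans (hD i))

theorem exists_norm_eigenvalue_le_sum_norm_row {K : Type*} [NormedField K] [Fintype n]
    [DecidableEq n] {A : Matrix n n K} {μ : K} (hμ : Module.End.HasEigenvalue (toLin' A) μ) :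
    ∃ k, ‖μ‖ ≤ ∑ j, ‖A k j‖ := by
  obtain ⟨k, hk⟩ := eigenvalue_mem_ball hμ
  refine ⟨k, ?_⟩
  rw [← Finset.add_sum_erase _ _ (Finset.mem_univ k)]
  calc ‖μ‖ ≤ ‖A k k‖ + ‖μ - A k k‖ := norm_le_norm_add_norm_sub' μ (A k k)
    _ ≤ _ := by gcongr; exact mem_closedBall_iff_norm.mp hk

end Matrix

theorem sum_norm_le_ncard_support_mul {ι E : Type*} [Fintype ι] [SeminormedAddGroup E]
    (f : ι → E) {D : ℝ} (hD : ∀ i, ‖f i‖ ≤ D) :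
    ∑ i, ‖f i‖ ≤ (Function.support f).ncard * D := by
  classical
  calc ∑ i, ‖f i‖ = ∑ i ∈ (Function.support f).toFinset, ‖f i‖ := by
        refine (Finset.sum_subset (Finset.subset_univ _) fun i _ hi => ?_).symm
        simp_all
    _ ≤ (Function.support f).toFinset.card • D := Finset.sum_le_card_nsmul _ _ _ fun i _ => hD i
    _ = (Function.support f).ncard * D := by rw [nsmul_eq_mul, Set.ncard_eq_toFinset_card']

/-- **Almost diagonal matrix bound**: if `M` is positive semidefinite and every row
of `M` has at most `m` nonzero entries, then every eigenvalue of `M` is at most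
`m · max_p M_{pp}`. -/
theorem sparse_psd_eigenvalue_bound (n : ℕ) (M : Matrix (Fin n) (Fin n) ℂ)
    (hM : M.PosSemidef) (m : ℕ) (hrow : ∀ p, {q | M p q ≠ 0}.ncard ≤ m)
    (μ : ℝ) (ψ : Fin n → ℂ) (hψ : ψ ≠ 0) (hev : M.mulVec ψ = (μ : ℂ) • ψ) :
    μ ≤ (m : ℝ) * ⨆ p, (M p p).re := by
  have hμ : Module.End.HasEigenvalue (toLin' M) (μ : ℂ) :=
    Module.End.hasEigenvalue_of_hasEigenvector
      ⟨Module.End.mem_eigenspace_iff.mpr (by rwa [toLin'_apply]), hψ⟩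
  obtain ⟨k, hk⟩ := exists_norm_eigenvalue_le_sum_norm_row hμ
  set D := ⨆ p, (M p p).re
  have hdiag : ∀ p, (M p p).re ≤ D := le_ciSup (Set.finite_range _).bddAbove
  have hD : 0 ≤ D := (RCLike.nonneg_iff.mp hM.diag_nonneg |>.1).trans (hdiag k)
  calc μ ≤ ‖(μ : ℂ)‖ := by rw [Complex.norm_real]; exact Real.le_norm_self μ
    _ ≤ ∑ j, ‖M k j‖ := hk
    _ ≤ {q | M k q ≠ 0}.ncard * D :=
        sum_norm_le_ncard_support_mul _ (hM.norm_apply_le_of_re_diag_le hdiag k)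
    _ ≤ m * D := by gcongr; exact hrow k
end

section
/- Let A and C be n×n Hermitian complex matrices and ε ∈ ℝ. Then, in the Loewner order, e^{iεC} A e^{−iεC} ≤ A + iε[C,A] + (ε²/2)·‖[C,[C,A]]‖·I, where ‖·‖ is the operator norm and I the identity matrix. (Note that iε[C,A] is Hermitian, so both sides are Hermitian.) -/
/-! For a vector `v`, the function `t ↦ re ⟪v, e^{itC} A e^{-itC} v⟫` has first derivative
`re ⟪v, e^{itC} i[C,A] e^{-itC} v⟫` and second derivative `-re ⟪v, e^{itC} [C,[C,A]] e^{-itC} v⟫`.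
Conjugation by the unitary `e^{itC}` preserves the operator norm, so the second derivative is at
most `‖[C,[C,A]]‖ ‖v‖²`, and second-order Taylor expansion at `t = 0` bounds the quadratic form
of the left-hand side by that of the right-hand side. The argument works for self-adjoint
operators on any complex Hilbert space; matrices are operators on Euclidean space. -/

open Matrix
open scoped ComplexOrder

noncomputable section

/-- The ℓ²→ℓ² operator norm of a complex matrix. -/
def opNorm (n : ℕ) (B : Matrix (Fin n) (Fin n) ℂ) : ℝ :=
  ‖Matrix.toEuclideanCLM (𝕜 := ℂ) B‖

open NormedSpace Complex

theorem le_taylor_two_of_hasDerivAt_of_le {g g' g'' : ℝ → ℝ} {M : ℝ}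
    (hg : ∀ t, HasDerivAt g (g' t) t) (hg' : ∀ t, HasDerivAt g' (g'' t) t)
    (hM : ∀ t, g'' t ≤ M) (ε : ℝ) :
    g ε ≤ g 0 + ε * g' 0 + ε ^ 2 / 2 * M := by
  set h : ℝ → ℝ := fun t => g 0 + t * g' 0 + t ^ 2 / 2 * M - g t
  have hh : ∀ t, HasDerivAt h (g' 0 + t * M - g' t) t := fun t => by
    refine ((((hasDerivAt_id t).mul_const (g' 0)).const_add (g 0)).add
      (((hasDerivAt_pow 2 t).div_const 2).mul_const M)).sub (hg t) |>.congr_deriv ?_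
    ring
  have hh' : ∀ t, HasDerivAt (fun t => g' 0 + t * M - g' t) (M - g'' t) t := fun t => by
    refine (((hasDerivAt_id t).mul_const M).const_add (g' 0)).sub (hg' t) |>.congr_deriv ?_
    simp
  have hconvex : ConvexOn ℝ Set.univ h :=
    convexOn_of_hasDerivWithinAt2_nonneg convex_univ
      (fun t _ => (hh t).continuousAt.continuousWithinAt)
      (fun t _ => (hh t).hasDerivWithinAt) (fun t _ => (hh' t).hasDerivWithinAt)
      (fun t _ => sub_nonneg.2 (hM t))
  -- `h 0 = 0` and `h' 0 = 0`, so the convex function `h` is minimal at `0`.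
  have hmin : IsMinOn h Set.univ 0 := hconvex.isMinOn_of_rightDeriv_eq_zero (by simp) <| by
    rw [(hh 0).hasDerivWithinAt.derivWithin (uniqueDiffWithinAt_Ioi 0)]
    simp
  have := isMinOn_iff.1 hmin ε (Set.mem_univ ε)
  simp only [h] at this
  linarith

theorem star_exp_smul_of_mem_skewAdjoint {𝔸 : Type*} [NormedRing 𝔸] [NormedAlgebra ℝ 𝔸]
    [StarRing 𝔸] [ContinuousStar 𝔸] [StarModule ℝ 𝔸] {b : 𝔸} (hb : b ∈ skewAdjoint 𝔸) (t : ℝ) :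
    star (exp (t • b)) = exp (-(t • b)) := by
  rw [star_exp, skewAdjoint.mem_iff.mp (skewAdjoint.smul_mem t hb)]

section ConjugationPath

variable {𝔸 : Type*} [NormedRing 𝔸] [NormedAlgebra ℝ 𝔸] [CompleteSpace 𝔸]

theorem hasDerivAt_exp_smul_mul_mul_exp_neg_smul (b x : 𝔸) (t : ℝ) :
    HasDerivAt (fun s : ℝ => exp (s • b) * x * exp (-(s • b)))
      (exp (t • b) * ⁅b, x⁆ * exp (-(t • b))) t := by
  have hb : Commute b (exp (t • -b)) := ((Commute.refl b).neg_right.smul_right t).exp_right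
  simp_rw [← smul_neg]
  refine (((hasDerivAt_exp_smul_const b t).mul_const x).mul
    (hasDerivAt_exp_smul_const (-b) t)).congr_deriv ?_
  rw [Ring.lie_def, mul_neg, ← hb.eq]
  noncomm_ring

theorem map_exp_conj_le_of_forall_map_le (ℓ : 𝔸 →L[ℝ] ℝ) (b x : 𝔸) {M : ℝ}
    (hM : ∀ t : ℝ, ℓ (exp (t • b) * ⁅b, ⁅b, x⁆⁆ * exp (-(t • b))) ≤ M) (ε : ℝ) :
    ℓ (exp (ε • b) * x * exp (-(ε • b))) ≤ ℓ x + ε * ℓ ⁅b, x⁆ + ε ^ 2 / 2 * M := by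
  have hderiv (y : 𝔸) (t : ℝ) := ℓ.hasFDerivAt.comp_hasDerivAt t
    (hasDerivAt_exp_smul_mul_mul_exp_neg_smul b y t)
  simpa using le_taylor_two_of_hasDerivAt_of_le (hderiv x) (hderiv ⁅b, x⁆) hM ε

variable [StarRing 𝔸] [CStarRing 𝔸] [StarModule ℝ 𝔸]

theorem norm_exp_smul_mul_mul_exp_neg_smul {b : 𝔸} (hb : b ∈ skewAdjoint 𝔸) (t : ℝ) (x : 𝔸) :
    ‖exp (t • b) * x * exp (-(t • b))‖ = ‖x‖ := by
  let : NormedAlgebra ℚ 𝔸 := .restrictScalars ℚ ℝ 𝔸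
  have hU := exp_mem_unitary_of_mem_skewAdjoint (skewAdjoint.smul_mem t hb)
  rw [← star_exp_smul_of_mem_skewAdjoint hb, CStarRing.norm_mul_mem_unitary _ (Unitary.star_mem hU),
    CStarRing.norm_mem_unitary_mul _ hU]

end ConjugationPath

theorem IsSelfAdjoint.I_mul_smul_lie {𝔸 : Type*} [Ring 𝔸] [StarRing 𝔸] [Module ℂ 𝔸] [StarModule ℂ 𝔸]
    {a c : 𝔸} (ha : IsSelfAdjoint a) (hc : IsSelfAdjoint c) (ε : ℝ) :
    IsSelfAdjoint ((I * ε) • ⁅c, a⁆) := by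
  have hstar : star (I * ε) = -(I * ε) := by simp
  rw [IsSelfAdjoint, star_smul, hstar, Ring.lie_def]
  simp only [star_sub, star_mul, ha.star_eq, hc.star_eq]
  rw [neg_smul, ← smul_neg, neg_sub]

namespace ContinuousLinearMap

variable {H : Type*} [NormedAddCommGroup H] [InnerProductSpace ℂ H]

def reApplyInnerSelfCLM (v : H) : (H →L[ℂ] H) →L[ℝ] ℝ :=
  reCLM.comp (((innerSL ℂ v).comp (apply ℂ H v)).restrictScalars ℝ)

theorem reApplyInnerSelfCLM_apply (v : H) (T : H →L[ℂ] H) :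
    reApplyInnerSelfCLM v T = T.reApplyInnerSelf v := by
  simpa [reApplyInnerSelfCLM, reApplyInnerSelf_apply] using inner_re_symm (𝕜 := ℂ) v (T v)

theorem reApplyInnerSelf_le_norm_mul_sq (T : H →L[ℂ] H) (v : H) :
    T.reApplyInnerSelf v ≤ ‖T‖ * ‖v‖ ^ 2 :=
  calc T.reApplyInnerSelf v ≤ ‖T v‖ * ‖v‖ := re_inner_le_norm _ _
    _ ≤ ‖T‖ * ‖v‖ * ‖v‖ := by gcongr; exact T.le_opNorm v
    _ = ‖T‖ * ‖v‖ ^ 2 := by ring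

theorem exp_smul_mul_mul_exp_neg_smul_le [CompleteSpace H] {A C : H →L[ℂ] H}
    (hA : IsSelfAdjoint A) (hC : IsSelfAdjoint C) (ε : ℝ) :
    exp ((I * ε) • C) * A * exp ((-(I * ε)) • C) ≤
      A + (I * ε) • ⁅C, A⁆ + ((ε ^ 2 / 2 * ‖⁅C, ⁅C, A⁆⁆‖ : ℝ) : ℂ) • 1 := by
  have hb : I • C ∈ skewAdjoint _ := hC.smul_mem_skewAdjoint conj_I
  have hsmul (s : ℝ) (X : H →L[ℂ] H) : (I * s) • X = s • (I • X) := by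
    rw [mul_comm, ← smul_smul, coe_smul]
  have hlie : ⁅I • C, A⁆ = I • ⁅C, A⁆ := by
    simp only [Ring.lie_def, smul_mul_assoc, mul_smul_comm, smul_sub]
  have hlie₂ : ⁅I • C, ⁅I • C, A⁆⁆ = -⁅C, ⁅C, A⁆⁆ := by
    simp only [hlie, Ring.lie_def, smul_mul_assoc, mul_smul_comm, smul_smul, I_mul_I,
      neg_one_smul]
    abel
  rw [neg_smul, hsmul ε C, le_def, isPositive_def']
  refine ⟨?_, fun v => ?_⟩
  · refine ((hA.add (hA.I_mul_smul_lie hC ε)).add (.smul ?_ (.one _))).sub ?_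
    · exact (im_eq_zero_iff_isSelfAdjoint _).mp rfl
    · rw [← star_exp_smul_of_mem_skewAdjoint hb]
      exact hA.conjugate _
  have key := map_exp_conj_le_of_forall_map_le (reApplyInnerSelfCLM v) (I • C) A
    (M := ‖⁅C, ⁅C, A⁆⁆‖ * ‖v‖ ^ 2) (fun t => by
      rw [reApplyInnerSelfCLM_apply, ← norm_neg, ← hlie₂,
        ← norm_exp_smul_mul_mul_exp_neg_smul hb t]
      exact reApplyInnerSelf_le_norm_mul_sq _ _) ε
  have hone : reApplyInnerSelfCLM v 1 = ‖v‖ ^ 2 := by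
    rw [reApplyInnerSelfCLM_apply, reApplyInnerSelf_apply, one_apply_eq_self, inner_self_eq_norm_sq]
  rw [hlie] at key
  rw [← reApplyInnerSelfCLM_apply, hsmul, coe_smul]
  simp only [map_sub, map_add, map_smul, hone, smul_eq_mul]
  linarith

end ContinuousLinearMap

theorem Matrix.toEuclideanCLM_exp {n : Type*} [Fintype n] [DecidableEq n] (X : Matrix n n ℂ) :
    toEuclideanCLM (𝕜 := ℂ) (exp X) = exp (toEuclideanCLM (𝕜 := ℂ) X) := by
  -- `map_exp` wants a normed ring; the L2 operator norm induces the usual topology on matrices.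
  open scoped Matrix.Norms.L2Operator in
  let : NormedAlgebra ℚ (Matrix n n ℂ) := .restrictScalars ℚ ℂ _
  exact map_exp (toEuclideanCLM (n := n) (𝕜 := ℂ)) (LinearMap.continuous_of_finiteDimensional
    (toEuclideanCLM (n := n) (𝕜 := ℂ)).toAlgEquiv.toLinearMap) X

theorem Matrix.posSemidef_iff_isPositive_toEuclideanCLM {n : Type*} [Fintype n] [DecidableEq n]
    (X : Matrix n n ℂ) : X.PosSemidef ↔ (toEuclideanCLM (𝕜 := ℂ) X).IsPositive := by
  rw [← ContinuousLinearMap.isPositive_toLinearMap_iff, coe_toEuclideanCLM_eq_toEuclideanLin,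
    isPositive_toEuclideanLin_iff]

/-- **Second-order Taylor bound for unitary conjugation**, in the Loewner order:
for Hermitian `A`, `C` and real `ε`,
`e^{iεC} A e^{−iεC} ≤ A + iε[C,A] + (ε²/2)·‖[C,[C,A]]‖·I`. -/
theorem conjugation_taylor_bound (n : ℕ) (A C : Matrix (Fin n) (Fin n) ℂ)
    (hA : A.IsHermitian) (hC : C.IsHermitian) (ε : ℝ) :
    (A + (Complex.I * (ε : ℂ)) • (C * A - A * C)
        + (((ε ^ 2 / 2) * opNorm n (C * (C * A - A * C) - (C * A - A * C) * C) : ℝ) : ℂ)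
            • (1 : Matrix (Fin n) (Fin n) ℂ)
        - NormedSpace.exp ((Complex.I * (ε : ℂ)) • C) * A *
            NormedSpace.exp ((-(Complex.I * (ε : ℂ))) • C)).PosSemidef := by
  have h := ContinuousLinearMap.exp_smul_mul_mul_exp_neg_smul_le
    (hA.isSelfAdjoint.map (toEuclideanCLM (n := Fin n) (𝕜 := ℂ)))
    (hC.isSelfAdjoint.map (toEuclideanCLM (n := Fin n) (𝕜 := ℂ))) ε
  rw [posSemidef_iff_isPositive_toEuclideanCLM]
  simpa [ContinuousLinearMap.le_def, Ring.lie_def, opNorm, toEuclideanCLM_exp] using h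

end
end

section
/- Let M and A be n×n complex matrices. Then |Tr( M† A M A† )| ≤ [ Tr( (M M†)^{1/2} A (M M†)^{1/2} A† ) ]^{1/2} · [ Tr( (M† M)^{1/2} A (M† M)^{1/2} A† ) ]^{1/2}, where (·)^{1/2} denotes the positive semidefinite square root; both traces on the right-hand side are nonnegative real numbers. -/
/-!
Factor `M = X * Y` with `X * Xᴴ = (M Mᴴ)^{1/2}` and `Yᴴ * Y = (Mᴴ M)^{1/2}`: take
`X = (M Mᴴ)^{1/4}` and `Y = X⁺ M` for the pseudo-inverse `X⁺`; then `X X⁺ M = M` because the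
range of `M` is that of `M Mᴴ`. With `S = Xᴴ A X` and `T = Y A Yᴴ`, cyclicity of the trace gives
`Tr(Mᴴ A M Aᴴ) = Tr(S Tᴴ)`, while the two traces on the right are `Tr(S Sᴴ)` and `Tr(T Tᴴ)`.
The claim is therefore the Cauchy–Schwarz inequality for the Frobenius inner product.
-/
open Matrix
open scoped ComplexOrder

noncomputable section

/-- The positive semidefinite square root `(MM†)^{1/2}`. -/
def sqrtMMH (n : ℕ) (M : Matrix (Fin n) (Fin n) ℂ) : Matrix (Fin n) (Fin n) ℂ :=
  (Matrix.posSemidef_self_mul_conjTranspose M).1.eigenvectorUnitary.1 *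
    diagonal ((↑) ∘ Real.sqrt ∘ (Matrix.posSemidef_self_mul_conjTranspose M).1.eigenvalues) *
    (star (Matrix.posSemidef_self_mul_conjTranspose M).1.eigenvectorUnitary : Matrix (Fin n) (Fin n) ℂ)

/-- The positive semidefinite square root `(M†M)^{1/2}`. -/
def sqrtMHM (n : ℕ) (M : Matrix (Fin n) (Fin n) ℂ) : Matrix (Fin n) (Fin n) ℂ :=
  (Matrix.posSemidef_conjTranspose_mul_self M).1.eigenvectorUnitary.1 *
    diagonal ((↑) ∘ Real.sqrt ∘ (Matrix.posSemidef_conjTranspose_mul_self M).1.eigenvalues) *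
    (star (Matrix.posSemidef_conjTranspose_mul_self M).1.eigenvectorUnitary : Matrix (Fin n) (Fin n) ℂ)

namespace Matrix

variable {m n 𝕜 : Type*} [Fintype m] [Fintype n] [RCLike 𝕜]

lemma trace_mul_conjTranspose_eq_sum (X Y : Matrix m n 𝕜) :
    (X * Yᴴ).trace = ∑ i, ∑ j, X i j * star (Y i j) := by
  simp [trace, mul_apply]

lemma trace_mul_conjTranspose_self_eq_sum (X : Matrix m n 𝕜) :
    (X * Xᴴ).trace = ((∑ i, ∑ j, ‖X i j‖ ^ 2 : ℝ) : 𝕜) := by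
  simp [trace_mul_conjTranspose_eq_sum, RCLike.mul_conj]

lemma norm_trace_mul_conjTranspose_le (X Y : Matrix m n 𝕜) :
    ‖(X * Yᴴ).trace‖ ≤
      √(RCLike.re (X * Xᴴ).trace) * √(RCLike.re (Y * Yᴴ).trace) := by
  rw [trace_mul_conjTranspose_self_eq_sum, trace_mul_conjTranspose_self_eq_sum,
    RCLike.ofReal_re, RCLike.ofReal_re, trace_mul_conjTranspose_eq_sum]
  calc ‖∑ i, ∑ j, X i j * star (Y i j)‖
      ≤ ∑ i, ∑ j, ‖X i j‖ * ‖Y i j‖ :=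
        (norm_sum_le _ _).trans <| Finset.sum_le_sum fun i _ ↦
          (norm_sum_le _ _).trans_eq <| by simp
    _ ≤ _ := by
      simpa only [Fintype.sum_prod_type] using
        Real.sum_mul_le_sqrt_mul_sqrt Finset.univ (fun p : m × n ↦ ‖X p.1 p.2‖)
          (fun p ↦ ‖Y p.1 p.2‖)

lemma trace_conjTranspose_mul_mul_mul_conjTranspose (X Y A : Matrix n n 𝕜) :
    ((X * Y)ᴴ * A * (X * Y) * Aᴴ).trace = ((Xᴴ * A * X) * (Y * A * Yᴴ)ᴴ).trace := by
  simp only [conjTranspose_mul, conjTranspose_conjTranspose, Matrix.mul_assoc]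
  rw [trace_mul_comm]
  simp only [Matrix.mul_assoc]

lemma trace_conjTranspose_mul_self_mul_mul_nonneg (X A : Matrix n n 𝕜) :
    0 ≤ (Xᴴ * X * A * (Xᴴ * X) * Aᴴ).trace := by
  have h := trace_conjTranspose_mul_mul_mul_conjTranspose Xᴴ X A
  rw [(isHermitian_conjTranspose_mul_self X).eq, conjTranspose_conjTranspose] at h
  exact h ▸ (posSemidef_self_mul_conjTranspose _).trace_nonneg

lemma norm_trace_conjTranspose_mul_mul_mul_conjTranspose_le (X Y A : Matrix n n 𝕜) :
    ‖((X * Y)ᴴ * A * (X * Y) * Aᴴ).trace‖ ≤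
      √(RCLike.re (X * Xᴴ * A * (X * Xᴴ) * Aᴴ).trace) *
        √(RCLike.re (Yᴴ * Y * A * (Yᴴ * Y) * Aᴴ).trace) := by
  have hX := trace_conjTranspose_mul_mul_mul_conjTranspose X Xᴴ A
  have hY := trace_conjTranspose_mul_mul_mul_conjTranspose Yᴴ Y A
  rw [(isHermitian_mul_conjTranspose_self X).eq, conjTranspose_conjTranspose] at hX
  rw [(isHermitian_conjTranspose_mul_self Y).eq, conjTranspose_conjTranspose] at hY
  rw [trace_conjTranspose_mul_mul_mul_conjTranspose, hX, hY]
  exact norm_trace_mul_conjTranspose_le (Xᴴ * A * X) (Y * A * Yᴴ)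

open scoped MatrixOrder

variable [DecidableEq n]

lemma IsHermitian.exists_commute_mul_mul_eq_self {R : Matrix n n 𝕜} (hR : R.IsHermitian) :
    ∃ G : Matrix n n 𝕜, G.IsHermitian ∧ Commute R G ∧ R * G * R = R := by
  have hcont (f : ℝ → ℝ) : ContinuousOn f (spectrum ℝ R) := (Set.toFinite _).continuousOn f
  refine ⟨cfc (·⁻¹ : ℝ → ℝ) R, (cfc_predicate (·⁻¹ : ℝ → ℝ) R : IsSelfAdjoint _).isHermitian,
    by simpa only [cfc_id ℝ R hR.isSelfAdjoint] using cfc_commute_cfc id (·⁻¹ : ℝ → ℝ) R, ?_⟩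
  calc R * cfc (·⁻¹ : ℝ → ℝ) R * R = cfc (fun x : ℝ ↦ x * x⁻¹ * x) R := by
        rw [cfc_mul (fun x : ℝ ↦ x * x⁻¹) (fun x ↦ x) R (hcont _) (hcont _),
          cfc_mul (fun x : ℝ ↦ x) (·⁻¹) R (hcont _) (hcont _), cfc_id' ℝ R hR.isSelfAdjoint]
    _ = R := by simp only [mul_inv_mul_cancel, cfc_id' ℝ R hR.isSelfAdjoint]

lemma exists_sqrt_factorization (M : Matrix n n 𝕜) :
    ∃ X Y : Matrix n n 𝕜, X * Y = M ∧ X * Xᴴ = CFC.sqrt (M * Mᴴ) ∧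
      Yᴴ * Y = CFC.sqrt (Mᴴ * M) := by
  set R := CFC.sqrt (CFC.sqrt (M * Mᴴ))
  have hR : R.IsHermitian := (CFC.sqrt_nonneg _).posSemidef.isHermitian
  have hRR : R * R = CFC.sqrt (M * Mᴴ) := CFC.sqrt_mul_sqrt_self _ (CFC.sqrt_nonneg _)
  have hMM : M * Mᴴ = R * R * (R * R) := by
    rw [hRR, CFC.sqrt_mul_sqrt_self _ (posSemidef_self_mul_conjTranspose M).nonneg]
  obtain ⟨G, hG, hRG, hRGR⟩ := hR.exists_commute_mul_mul_eq_self
  have hGRR : G * (R * R) = R := by rw [← Matrix.mul_assoc, ← hRG.eq, hRGR]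
  have hRRG : R * R * G = R := by rw [Matrix.mul_assoc, hRG.eq, ← Matrix.mul_assoc, hRGR]
  have hRY : R * (G * M) = M := by
    -- `1 - R * G` annihilates `R`, hence `M * Mᴴ = R⁴`, hence `M`.
    have hker : (1 - R * G) * R = 0 := by rw [sub_mul, one_mul, hRGR, sub_self]
    have hN : ((1 - R * G) * M) * ((1 - R * G) * M)ᴴ = 0 := by
      calc ((1 - R * G) * M) * ((1 - R * G) * M)ᴴ
          = (1 - R * G) * (M * Mᴴ) * (1 - R * G)ᴴ := by
            simp only [conjTranspose_mul, Matrix.mul_assoc]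
        _ = ((1 - R * G) * R) * (R * R) * ((1 - R * G) * R)ᴴ := by
            simp only [hMM, conjTranspose_mul, hR.eq, Matrix.mul_assoc]
        _ = 0 := by rw [hker, Matrix.zero_mul, Matrix.zero_mul]
    have hM : M - R * (G * M) = (1 - R * G) * M := by rw [sub_mul, one_mul, Matrix.mul_assoc]
    exact (sub_eq_zero.mp (hM ▸ self_mul_conjTranspose_eq_zero.mp hN)).symm
  have hYY : G * M * (G * M)ᴴ = R * R := by
    calc G * M * (G * M)ᴴ = G * (R * R) * (R * R * G) := by
          rw [conjTranspose_mul, hG.eq, Matrix.mul_assoc G M, ← Matrix.mul_assoc M, hMM]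
          simp only [Matrix.mul_assoc]
      _ = R * R := by rw [hGRR, hRRG]
  refine ⟨R, G * M, hRY, by rw [hR.eq, hRR], ((CFC.sqrt_eq_iff _ _
    (posSemidef_conjTranspose_mul_self M).nonneg
    (posSemidef_conjTranspose_mul_self _).nonneg).mpr ?_).symm⟩
  calc (G * M)ᴴ * (G * M) * ((G * M)ᴴ * (G * M))
      = (G * M)ᴴ * (G * M * (G * M)ᴴ) * (G * M) := by simp only [Matrix.mul_assoc]
    _ = (R * (G * M))ᴴ * (R * (G * M)) := by
        rw [hYY, conjTranspose_mul R, hR.eq]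
        simp only [Matrix.mul_assoc]
    _ = Mᴴ * M := by rw [hRY]

lemma PosSemidef.sqrt_eq_spectral {B : Matrix n n 𝕜} (hB : B.PosSemidef) :
    CFC.sqrt B = hB.1.eigenvectorUnitary.1 * diagonal ((↑) ∘ Real.sqrt ∘ hB.1.eigenvalues) *
      (star hB.1.eigenvectorUnitary : Matrix n n 𝕜) := by
  rw [CFC.sqrt_eq_real_sqrt B hB.nonneg, cfcₙ_eq_cfc, hB.1.cfc_eq, IsHermitian.cfc,
    Unitary.conjStarAlgAut_apply]

end Matrix

/-- **Trace Cauchy–Schwarz inequality** used for reflection positivity: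
`|Tr(M†AMA†)| ≤ [Tr((MM†)^{1/2}A(MM†)^{1/2}A†)]^{1/2} [Tr((M†M)^{1/2}A(M†M)^{1/2}A†)]^{1/2}`,
both traces on the right being nonnegative reals. -/
theorem trace_cauchy_schwarz (n : ℕ) (M A : Matrix (Fin n) (Fin n) ℂ) :
    (sqrtMMH n M * A * sqrtMMH n M * Aᴴ).trace.im = 0 ∧
    0 ≤ (sqrtMMH n M * A * sqrtMMH n M * Aᴴ).trace.re ∧
    (sqrtMHM n M * A * sqrtMHM n M * Aᴴ).trace.im = 0 ∧
    0 ≤ (sqrtMHM n M * A * sqrtMHM n M * Aᴴ).trace.re ∧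
    ‖(Mᴴ * A * M * Aᴴ).trace‖ ≤
      Real.sqrt ((sqrtMMH n M * A * sqrtMMH n M * Aᴴ).trace.re) *
        Real.sqrt ((sqrtMHM n M * A * sqrtMHM n M * Aᴴ).trace.re) := by
  obtain ⟨X, Y, hXY, hX, hY⟩ := exists_sqrt_factorization M
  have hP : sqrtMMH n M = X * Xᴴ := hX ▸ (posSemidef_self_mul_conjTranspose M).sqrt_eq_spectral.symm
  have hQ : sqrtMHM n M = Yᴴ * Y := hY ▸ (posSemidef_conjTranspose_mul_self M).sqrt_eq_spectral.symm
  have hP_nonneg : 0 ≤ (X * Xᴴ * A * (X * Xᴴ) * Aᴴ).trace := by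
    simpa using trace_conjTranspose_mul_self_mul_mul_nonneg Xᴴ A
  have hQ_nonneg := trace_conjTranspose_mul_self_mul_mul_nonneg Y A
  rw [Complex.nonneg_iff] at hP_nonneg hQ_nonneg
  rw [hP, hQ, ← hXY]
  exact ⟨hP_nonneg.2.symm, hP_nonneg.1, hQ_nonneg.2.symm, hQ_nonneg.1,
    norm_trace_conjTranspose_mul_mul_mul_conjTranspose_le X Y A⟩

end
end
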